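/- arXiv:math/0508415 — 4 statements merged into one kernel-verified Lean document; each statement's English description precedes it below -/
import Mathlib

section
/- Let θ_0, θ_1, ..., θ_d be mutually distinct scalars in a field K of characteristic 0 with d ≥ 3. Suppose that the ratio (θ_{i−2} − θ_{i+1})/(θ_{i−1} − θ_i) is independent of i for 2 ≤ i ≤ d−1, and that (θ_1 − θ_2)/(θ_0 − θ_1) = (θ_2 − θ_3)/(θ_1 − θ_2). Then (θ_i − θ_{i+1})/(θ_{i−1} − θ_i) is independent of i for 1 ≤ i ≤ d−1. -/
theorem stmt_4 {K : Type*} [Field K] [CharZero K] (d : ℕ) (hd : 3 ≤ d) (θ : ℕ → K)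
    (hdist : ∀ i ≤ d, ∀ j ≤ d, i ≠ j → θ i ≠ θ j)
    (hconst : ∀ i j, 2 ≤ i → i ≤ d - 1 → 2 ≤ j → j ≤ d - 1 →
      (θ (i - 2) - θ (i + 1)) / (θ (i - 1) - θ i) =
        (θ (j - 2) - θ (j + 1)) / (θ (j - 1) - θ j))
    (hinit : (θ 1 - θ 2) / (θ 0 - θ 1) = (θ 2 - θ 3) / (θ 1 - θ 2)) :
    ∀ i j, 1 ≤ i → i ≤ d - 1 → 1 ≤ j → j ≤ d - 1 →
      (θ i - θ (i + 1)) / (θ (i - 1) - θ i) =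
        (θ j - θ (j + 1)) / (θ (j - 1) - θ j) := by
  have hne : ∀ i j, i ≤ d → j ≤ d → i ≠ j → θ i - θ j ≠ 0 := by
    intro i j hi hj hij
    exact sub_ne_zero.mpr (hdist i hi j hj hij)
  have key : ∀ i, 1 ≤ i → i + 1 ≤ d - 1 →
      (θ i - θ (i+1)) / (θ (i-1) - θ i) = (θ (i+1) - θ (i+2)) / (θ i - θ (i+1)) := by
    intro i
    induction i using Nat.strong_induction_on with
    | _ i IH =>
      intro h1 h2
      rcases Nat.lt_or_ge i 2 with hi2 | hi2
      · interval_cases i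
        simpa using hinit
      · have hprev := IH (i-1) (by omega) (by omega) (by omega)
        have step := hconst (i+1) i (by omega) (by omega) hi2 (by omega)
        have e1 : i + 1 - 2 = i - 1 := by omega
        have e2 : i + 1 - 1 = i := by omega
        have e3 : i - 1 + 1 = i := by omega
        have e4 : i - 1 - 1 = i - 2 := by omega
        have e5 : i - 1 + 2 = i + 1 := by omega
        rw [e1, e2] at step
        rw [e3, e4, e5] at hprev
        have ha : θ (i-2) - θ (i-1) ≠ 0 := hne _ _ (by omega) (by omega) (by omega)
        have hb : θ (i-1) - θ i ≠ 0 := hne _ _ (by omega) (by omega) (by omega)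
        have hc : θ i - θ (i+1) ≠ 0 := hne _ _ (by omega) (by omega) (by omega)
        have e6 : i + 1 + 1 = i + 2 := by omega
        rw [e6] at step
        field_simp at hprev step ⊢
        linear_combination hprev - step
  have main : ∀ i, 1 ≤ i → i ≤ d - 1 →
      (θ i - θ (i+1)) / (θ (i-1) - θ i) = (θ 1 - θ 2) / (θ 0 - θ 1) := by
    intro i hi1
    induction i, hi1 using Nat.le_induction with
    | base => intro _; norm_num
    | succ n hn IH =>
      intro h2
      have hk := key n hn (by omega)
      rw [show n+1-1 = n from rfl, show n+1+1 = n+2 from rfl, ← hk]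
      exact IH (by omega)
  intro i j hi1 hi2 hj1 hj2
  rw [main i hi1 hi2, main j hj1 hj2]
end

section
/- Let V be a vector space over a field K of characteristic 0 with dim V ≥ 2, and let (A, A*) be a Leonard pair on V. Then no flag on V is both A-standard and A*-standard. -/
open Module

/-- A square matrix is diagonal. -/
def Matrix.IsDiag' {K : Type*} [Zero K] {n : ℕ} (M : Matrix (Fin n) (Fin n) K) : Prop :=
  ∀ i j, i ≠ j → M i j = 0

/-- A square matrix is irreducible tridiagonal: entries are zero off the three central
diagonals, and all subdiagonal and superdiagonal entries are nonzero. -/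
def Matrix.IsIrredTridiag {K : Type*} [Zero K] {n : ℕ} (M : Matrix (Fin n) (Fin n) K) : Prop :=
  (∀ i j : Fin n, ((i : ℕ) + 1 < (j : ℕ) ∨ (j : ℕ) + 1 < (i : ℕ)) → M i j = 0) ∧
  (∀ i j : Fin n, ((i : ℕ) + 1 = (j : ℕ) ∨ (j : ℕ) + 1 = (i : ℕ)) → M i j ≠ 0)

/-- A square matrix is lower bidiagonal. -/
def Matrix.IsLowerBidiag {K : Type*} [Zero K] {n : ℕ} (M : Matrix (Fin n) (Fin n) K) : Prop :=
  ∀ i j : Fin n, ¬(i = j ∨ (j : ℕ) + 1 = (i : ℕ)) → M i j = 0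

/-- A square matrix is upper bidiagonal. -/
def Matrix.IsUpperBidiag {K : Type*} [Zero K] {n : ℕ} (M : Matrix (Fin n) (Fin n) K) : Prop :=
  ∀ i j : Fin n, ¬(i = j ∨ (i : ℕ) + 1 = (j : ℕ)) → M i j = 0

variable {K V : Type*} [Field K] [AddCommGroup V] [Module K V] [FiniteDimensional K V]

/-- `b` is an `A`-standard basis for the pair `(A, A*)`: the matrix of `A` is diagonal
and the matrix of `A*` is irreducible tridiagonal. -/
def IsAStandardBasis (A Astar : Module.End K V)
    (b : Basis (Fin (finrank K V)) K V) : Prop :=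
  (LinearMap.toMatrix b b A).IsDiag' ∧ (LinearMap.toMatrix b b Astar).IsIrredTridiag

/-- `(A, A*)` is a Leonard pair on `V`. -/
def IsLeonardPair (A Astar : Module.End K V) : Prop :=
  (∃ b : Basis (Fin (finrank K V)) K V, IsAStandardBasis A Astar b) ∧
  (∃ b : Basis (Fin (finrank K V)) K V, IsAStandardBasis Astar A b)

/-- A basis is standard for `(A, A*)` whenever it is `A`-standard or `A*`-standard. -/
def IsStandardBasis (A Astar : Module.End K V)
    (b : Basis (Fin (finrank K V)) K V) : Prop :=
  IsAStandardBasis A Astar b ∨ IsAStandardBasis Astar A b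

/-- A basis is split for `(A, A*)` whenever with respect to it one of `A, A*` is lower
bidiagonal and the other is upper bidiagonal. -/
def IsSplitBasis (A Astar : Module.End K V)
    (b : Basis (Fin (finrank K V)) K V) : Prop :=
  ((LinearMap.toMatrix b b A).IsLowerBidiag ∧ (LinearMap.toMatrix b b Astar).IsUpperBidiag) ∨
  ((LinearMap.toMatrix b b A).IsUpperBidiag ∧ (LinearMap.toMatrix b b Astar).IsLowerBidiag)

/-- Two Leonard pairs are adjacent whenever each standard basis for one is split for
the other. -/
def LPAdjacent (P Q : Module.End K V × Module.End K V) : Prop :=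
  (∀ b : Basis (Fin (finrank K V)) K V, IsStandardBasis P.1 P.2 b → IsSplitBasis Q.1 Q.2 b) ∧
  (∀ b : Basis (Fin (finrank K V)) K V, IsStandardBasis Q.1 Q.2 b → IsSplitBasis P.1 P.2 b)

/-- The flag induced by a basis, `Fᵢ = span(b₀) + ⋯ + span(bᵢ)`. -/
def flagOfBasis (b : Basis (Fin (finrank K V)) K V) (i : Fin (finrank K V)) :
    Submodule K V :=
  ⨆ k ≤ i, K ∙ b k

/-- An `A`-standard flag: one induced by (the decomposition induced by) an
`A`-standard basis. -/
def IsAStandardFlag (A Astar : Module.End K V)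
    (F : Fin (finrank K V) → Submodule K V) : Prop :=
  ∃ b : Basis (Fin (finrank K V)) K V, IsAStandardBasis A Astar b ∧ F = flagOfBasis b

/-- A standard decomposition for `(A, A*)`: the decomposition induced by a
standard basis. -/
def IsStandardDecomp (A Astar : Module.End K V)
    (W : Fin (finrank K V) → Submodule K V) : Prop :=
  ∃ b : Basis (Fin (finrank K V)) K V, IsStandardBasis A Astar b ∧ ∀ i, W i = K ∙ b i

theorem stmt_8 {K V : Type*} [Field K] [CharZero K] [AddCommGroup V] [Module K V]
    [FiniteDimensional K V] (hV : 2 ≤ finrank K V)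
    (A Astar : Module.End K V) (hLP : IsLeonardPair A Astar) :
    ¬ ∃ F : Fin (finrank K V) → Submodule K V,
        IsAStandardFlag A Astar F ∧ IsAStandardFlag Astar A F := by
  rintro ⟨F, ⟨b, hb, rfl⟩, ⟨c, hc, hF⟩⟩
  have h0 : 0 < finrank K V := by omega
  have h1 : 1 < finrank K V := by omega
  set i0 : Fin (finrank K V) := ⟨0, h0⟩ with hi0
  set i1 : Fin (finrank K V) := ⟨1, h1⟩ with hi1
  have flag0 : ∀ (d : Basis (Fin (finrank K V)) K V), flagOfBasis d i0 = K ∙ d i0 := by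
    intro d
    apply le_antisymm
    · refine iSup_le fun k => iSup_le fun hk => ?_
      have hk0 : k = i0 := le_antisymm hk (Fin.mk_le_mk.mpr (Nat.zero_le _))
      rw [hk0]
    · exact le_iSup_of_le i0 (le_iSup_of_le le_rfl le_rfl)
  have hspan : (K ∙ b i0) = (K ∙ c i0) := by
    rw [← flag0 b, ← flag0 c, hF]
  -- A* acts as a scalar on c i0
  have hcd : Astar (c i0) = (LinearMap.toMatrix c c Astar i0 i0) • c i0 := by
    apply c.repr.injective
    ext j
    by_cases hj : j = i0
    · subst hj
      simp [LinearMap.toMatrix_apply, Basis.repr_self, Finsupp.single_apply]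
    · have hz : LinearMap.toMatrix c c Astar j i0 = 0 := hc.1 j i0 hj
      rw [map_smul]
      simp only [Finsupp.smul_apply, Basis.repr_self, Finsupp.single_apply]
      rw [LinearMap.toMatrix_apply] at hz
      simp [hz, Ne.symm hj]
  -- b i0 is a multiple of c i0
  have hb0 : b i0 ∈ (K ∙ c i0) := by
    rw [← hspan]; exact Submodule.mem_span_singleton_self _
  obtain ⟨a, ha⟩ := Submodule.mem_span_singleton.mp hb0
  -- hence A* (b i0) ∈ span (b i0)
  have hmem : Astar (b i0) ∈ (K ∙ b i0) := by
    rw [hspan, ← ha, map_smul, hcd, smul_smul]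
    exact Submodule.smul_mem _ _ (Submodule.mem_span_singleton_self _)
  obtain ⟨β, hβ⟩ := Submodule.mem_span_singleton.mp hmem
  have hM : LinearMap.toMatrix b b Astar i1 i0 ≠ 0 := hb.2.2 i1 i0 (Or.inr rfl)
  apply hM
  rw [LinearMap.toMatrix_apply, ← hβ, map_smul]
  simp only [Finsupp.smul_apply, Basis.repr_self, Finsupp.single_apply]
  have : i0 ≠ i1 := by simp [hi0, hi1, Fin.ext_iff]
  simp [this]
end

section
/- Let V be a vector space over a field K of characteristic 0 with dim V ≥ 2, and let (A, A*) be a Leonard pair on V. Then there are exactly two A-standard flags on V, exactly two A*-standard flags on V, and the set F(A, A*) of flags standard for (A, A*) has exactly 4 elements. -/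
open Module

variable {K V : Type*} [Field K] [AddCommGroup V] [Module K V] [FiniteDimensional K V]

section Aux
set_option linter.unusedSectionVars false
variable {K V : Type*} [Field K] [AddCommGroup V] [Module K V] [FiniteDimensional K V]

omit [FiniteDimensional K V] in
lemma diag_eigen {A : Module.End K V} {b : Basis (Fin (finrank K V)) K V}
    (hd : (LinearMap.toMatrix b b A).IsDiag') (j : Fin (finrank K V)) :
    A (b j) = (LinearMap.toMatrix b b A j j) • b j := by
  apply b.repr.injective
  ext i
  rw [map_smul, Finsupp.smul_apply, Basis.repr_self, Finsupp.single_apply, smul_eq_mul]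
  by_cases h : j = i
  · subst h
    rw [if_pos rfl, LinearMap.toMatrix_apply, mul_one]
  · rw [if_neg h, mul_zero, ← LinearMap.toMatrix_apply]
    exact hd i j (fun hij => h hij.symm)

omit [FiniteDimensional K V] in
lemma row_eq {B : Module.End K V} {e : Basis (Fin (finrank K V)) K V} (v : V)
    (i : Fin (finrank K V)) :
    e.repr (B v) i = ∑ j, LinearMap.toMatrix e e B i j * e.repr v j := by
  have := congrFun (congrArg (fun f => (f : (Fin (finrank K V) → K)))
    (LinearMap.toMatrix_mulVec_repr e e B v)) i
  simpa [Matrix.mulVec, dotProduct] using this.symm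

lemma tridiag_ker {B : Module.End K V} {e : Basis (Fin (finrank K V)) K V}
    (hT : (LinearMap.toMatrix e e B).IsIrredTridiag) {lam : K} {v : V}
    (hv : B v = lam • v) (hpos : 0 < finrank K V)
    (h0 : e.repr v ⟨0, hpos⟩ = 0) : v = 0 := by
  have key : ∀ i : Fin (finrank K V),
      ∑ j, LinearMap.toMatrix e e B i j * e.repr v j = lam * e.repr v i := by
    intro i
    rw [← row_eq, hv, map_smul, Finsupp.smul_apply, smul_eq_mul]
  have main : ∀ m : ℕ, ∀ i : Fin (finrank K V), (i : ℕ) ≤ m → e.repr v i = 0 := by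
    intro m
    induction m with
    | zero =>
      intro i hi
      have : i = ⟨0, hpos⟩ := Fin.ext (Nat.le_zero.mp hi)
      rwa [this]
    | succ m ih =>
      intro i hi
      rcases Nat.lt_or_ge (i : ℕ) (m+1) with h | h
      · exact ih i (Nat.lt_succ_iff.mp h)
      have him : (i : ℕ) = m + 1 := le_antisymm hi h
      have hm : m < finrank K V := by have := i.isLt; omega
      have hrow := key ⟨m, hm⟩
      have hx_im : e.repr v ⟨m, hm⟩ = 0 := ih ⟨m, hm⟩ le_rfl
      rw [hx_im, mul_zero] at hrow
      have hsum : ∑ j, LinearMap.toMatrix e e B ⟨m, hm⟩ j * e.repr v j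
          = LinearMap.toMatrix e e B ⟨m, hm⟩ i * e.repr v i := by
        apply Finset.sum_eq_single_of_mem i (Finset.mem_univ i)
        intro j _ hji
        rcases Nat.lt_trichotomy (j : ℕ) (m+1) with hj | hj | hj
        · rw [ih j (Nat.lt_succ_iff.mp hj), mul_zero]
        · exact absurd (Fin.ext (hj.trans him.symm)) hji
        · rw [hT.1 ⟨m, hm⟩ j (Or.inl (by simpa using hj)), zero_mul]
      rw [hsum] at hrow
      have hT' : LinearMap.toMatrix e e B ⟨m, hm⟩ i ≠ 0 :=
        hT.2 ⟨m, hm⟩ i (Or.inl (by simp [him]))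
      rcases mul_eq_zero.mp hrow with h' | h'
      · exact absurd h' hT'
      · exact h'
  have hr : e.repr v = 0 := by
    ext i
    exact main (i : ℕ) i le_rfl
  simpa using e.repr.map_eq_zero_iff.mp (by rw [hr])


lemma theta_inj {A Astar : Module.End K V} {b : Basis (Fin (finrank K V)) K V}
    (hb : IsAStandardBasis A Astar b)
    (hstar : ∃ e : Basis (Fin (finrank K V)) K V, IsAStandardBasis Astar A e)
    (hpos : 0 < finrank K V) :
    Function.Injective (fun i => LinearMap.toMatrix b b A i i) := by
  obtain ⟨e, he⟩ := hstar
  intro i j hij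
  simp only at hij
  by_contra hne
  have hbj : ∀ k, A (b k) = (LinearMap.toMatrix b b A k k) • b k := diag_eigen hb.1
  have h0j : e.repr (b j) ⟨0, hpos⟩ ≠ 0 := by
    intro h
    exact b.ne_zero j (tridiag_ker he.2 (hbj j) hpos h)
  set c := e.repr (b i) ⟨0, hpos⟩ / e.repr (b j) ⟨0, hpos⟩ with hc
  have hv : A (b i - c • b j) = (LinearMap.toMatrix b b A i i) • (b i - c • b j) := by
    rw [map_sub, map_smul, hbj i, hbj j, smul_sub, smul_smul, smul_smul, hij, mul_comm]
  have h0 : e.repr (b i - c • b j) ⟨0, hpos⟩ = 0 := by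
    rw [map_sub, map_smul, Finsupp.sub_apply, Finsupp.smul_apply, smul_eq_mul, hc,
      div_mul_cancel₀ _ h0j, sub_self]
  have hz := sub_eq_zero.mp (tridiag_ker he.2 hv hpos h0)
  have happ := congrArg (fun w => b.repr w i) hz
  simp [Basis.repr_self, Finsupp.single_apply, Ne.symm hne] at happ

lemma eigvec_mem {A : Module.End K V} {b : Basis (Fin (finrank K V)) K V}
    (hd : (LinearMap.toMatrix b b A).IsDiag')
    (hinj : Function.Injective (fun i => LinearMap.toMatrix b b A i i))
    {mu : K} {v : V} (hv : A v = mu • v) (hv0 : v ≠ 0) :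
    ∃ (k : Fin (finrank K V)) (c : K), c ≠ 0 ∧ v = c • b k := by
  have hx : ∃ k, b.repr v k ≠ 0 := by
    by_contra h
    push_neg at h
    exact hv0 (by simpa using b.repr.map_eq_zero_iff.mp (Finsupp.ext h))
  obtain ⟨k, hk⟩ := hx
  have hco : ∀ l, LinearMap.toMatrix b b A l l * b.repr v l = mu * b.repr v l := by
    intro l
    have hre := row_eq (B := A) (e := b) v l
    rw [hv, map_smul, Finsupp.smul_apply, smul_eq_mul] at hre
    have hsum : (∑ j, LinearMap.toMatrix b b A l j * b.repr v j)
        = LinearMap.toMatrix b b A l l * b.repr v l :=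
      Finset.sum_eq_single_of_mem l (Finset.mem_univ l)
        (fun j _ hjl => by rw [hd l j (Ne.symm hjl), zero_mul])
    rw [hre, hsum]
  have hmu : LinearMap.toMatrix b b A k k = mu := mul_right_cancel₀ hk (hco k)
  have hxl : ∀ l, l ≠ k → b.repr v l = 0 := by
    intro l hlk
    by_contra hxl0
    have : LinearMap.toMatrix b b A l l = mu := mul_right_cancel₀ hxl0 (hco l)
    exact hlk (hinj (this.trans hmu.symm))
  refine ⟨k, b.repr v k, hk, ?_⟩
  conv_lhs => rw [← b.sum_repr v]
  rw [Finset.sum_eq_single_of_mem k (Finset.mem_univ k)]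
  intro l _ hlk
  rw [hxl l hlk, zero_smul]

lemma sigma_exists {A Astar : Module.End K V} {b b' : Basis (Fin (finrank K V)) K V}
    (hb' : IsAStandardBasis A Astar b')
    (hinj : Function.Injective (fun i => LinearMap.toMatrix b b A i i))
    (hd : (LinearMap.toMatrix b b A).IsDiag') :
    ∃ σ : Fin (finrank K V) → Fin (finrank K V), Function.Injective σ ∧
      ∃ c : Fin (finrank K V) → K, (∀ j, c j ≠ 0) ∧ (∀ j, b' j = c j • b (σ j)) := by
  have h := fun j => eigvec_mem hd hinj (diag_eigen hb'.1 j) (b'.ne_zero j)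
  choose σ c hc hbc using h
  refine ⟨σ, ?_, c, hc, hbc⟩
  intro i j hij
  by_contra hne
  have hbb : b' i = (c i / c j) • b' j := by
    rw [hbc i, hbc j, hij, smul_smul, div_mul_cancel₀ _ (hc j)]
  have happ := congrArg (fun w => b'.repr w i) hbb
  simp [Basis.repr_self, Finsupp.single_apply, Ne.symm hne] at happ


omit [FiniteDimensional K V] in
lemma matrix_rel {Astar : Module.End K V} {b b' : Basis (Fin (finrank K V)) K V}
    {σ : Fin (finrank K V) → Fin (finrank K V)} (hσ : Function.Injective σ)
    {c : Fin (finrank K V) → K} (hbc : ∀ j, b' j = c j • b (σ j))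
    (i j : Fin (finrank K V)) :
    c i * LinearMap.toMatrix b' b' Astar i j
      = c j * LinearMap.toMatrix b b Astar (σ i) (σ j) := by
  have h1 : b.repr (Astar (b' j)) (σ i)
      = c j * LinearMap.toMatrix b b Astar (σ i) (σ j) := by
    rw [hbc j, map_smul, map_smul, Finsupp.smul_apply, smul_eq_mul, LinearMap.toMatrix_apply]
  have hexp : Astar (b' j) = ∑ l, LinearMap.toMatrix b' b' Astar l j • b' l := by
    conv_lhs => rw [← b'.sum_repr (Astar (b' j))]
    exact Finset.sum_congr rfl (fun l _ => by rw [LinearMap.toMatrix_apply])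
  have hrepr : ∀ l, (b.repr (b' l)) (σ i) = if l = i then c l else 0 := by
    intro l
    rw [hbc l, map_smul, Finsupp.smul_apply, Basis.repr_self, Finsupp.single_apply, smul_eq_mul]
    by_cases h : l = i
    · rw [if_pos (by rw [h]), if_pos h, mul_one]
    · rw [if_neg (fun hh => h (hσ hh)), if_neg h, mul_zero]
  have h2 : b.repr (Astar (b' j)) (σ i) = c i * LinearMap.toMatrix b' b' Astar i j := by
    conv_lhs => rw [hexp]
    rw [map_sum, Finset.sum_apply']
    have hsum : (∑ l, (b.repr (LinearMap.toMatrix b' b' Astar l j • b' l)) (σ i))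
        = (b.repr (LinearMap.toMatrix b' b' Astar i j • b' i)) (σ i) :=
      Finset.sum_eq_single_of_mem i (Finset.mem_univ i) (fun l _ hli => by
        rw [map_smul, Finsupp.smul_apply, hrepr l, if_neg hli, smul_eq_mul, mul_zero])
    rw [hsum, map_smul, Finsupp.smul_apply, hrepr i, if_pos rfl, smul_eq_mul, mul_comm]
  rw [← h1, h2]

omit [FiniteDimensional K V] in
lemma sigma_adj {A Astar : Module.End K V} {b b' : Basis (Fin (finrank K V)) K V}
    (hb : IsAStandardBasis A Astar b) (hb' : IsAStandardBasis A Astar b')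
    {σ : Fin (finrank K V) → Fin (finrank K V)} (hσ : Function.Injective σ)
    {c : Fin (finrank K V) → K} (hc : ∀ j, c j ≠ 0) (hbc : ∀ j, b' j = c j • b (σ j)) :
    ∀ i j : Fin (finrank K V), (i:ℕ)+1 = j → ((σ i:ℕ)+1 = σ j ∨ (σ j:ℕ)+1 = σ i) := by
  intro i j hij
  have hM' : LinearMap.toMatrix b' b' Astar i j ≠ 0 := hb'.2.2 i j (Or.inl hij)
  have hrel := matrix_rel hσ hbc (Astar := Astar) i j
  have hM : LinearMap.toMatrix b b Astar (σ i) (σ j) ≠ 0 := by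
    intro h
    rw [h, mul_zero] at hrel
    exact (mul_ne_zero (hc i) hM') hrel
  have h1 : ¬(((σ i:ℕ)+1 < σ j) ∨ ((σ j:ℕ)+1 < σ i)) := fun h => hM (hb.2.1 (σ i) (σ j) h)
  have hne : (σ i : ℕ) ≠ (σ j : ℕ) := by
    intro h
    have : i = j := hσ (Fin.ext h)
    omega
  push_neg at h1
  omega

lemma path_lemma {n : ℕ} (hn : 2 ≤ n) (σ : Fin n → Fin n) (hσ : Function.Injective σ)
    (hadj : ∀ i j : Fin n, (i:ℕ)+1 = j → ((σ i:ℕ)+1 = σ j ∨ (σ j:ℕ)+1 = σ i)) :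
    (∀ i, σ i = i) ∨ (∀ i : Fin n, (σ i : ℕ) = n - 1 - i) := by
  set s : ℕ → ℕ := fun i => if h : i < n then (σ ⟨i, h⟩ : ℕ) else 0 with hsdef
  have hs : ∀ i : Fin n, s i = (σ i : ℕ) := by
    intro i
    simp [hsdef, i.isLt]
  have hstep : ∀ i : ℕ, i + 1 < n → (s i + 1 = s (i+1) ∨ s (i+1) + 1 = s i) := by
    intro i h
    have := hadj ⟨i, by omega⟩ ⟨i+1, h⟩ rfl
    rcases this with h' | h'
    · left
      rw [hs ⟨i, by omega⟩, hs ⟨i+1, h⟩]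
      exact h'
    · right
      rw [hs ⟨i, by omega⟩, hs ⟨i+1, h⟩]
      exact h'
  have hinj : ∀ i j : ℕ, i < n → j < n → s i = s j → i = j := by
    intro i j hi hj h
    rw [hs ⟨i, hi⟩, hs ⟨j, hj⟩] at h
    exact congrArg Fin.val (hσ (Fin.ext h))
  have hlt : ∀ i : ℕ, i < n → s i < n := by
    intro i hi
    rw [hs ⟨i, hi⟩]
    exact (σ ⟨i, hi⟩).isLt
  rcases hstep 0 (by omega) with h01 | h01
  · left
    have up : ∀ i : ℕ, i + 1 < n → s i + 1 = s (i+1) := by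
      intro i
      induction i with
      | zero => intro h; exact h01
      | succ m ih =>
        intro h
        have prev := ih (by omega)
        have hnorm : s (m+1+1) = s (m+2) := congrArg s (by omega)
        rcases hstep (m+1) h with h' | h'
        · exact h'
        · have : m + 2 = m := hinj (m+2) m h (by omega) (by omega)
          omega
    have lin : ∀ i : ℕ, i < n → s i = s 0 + i := by
      intro i
      induction i with
      | zero => intro h; omega
      | succ m ih =>
        intro h
        have := up m h
        have := ih (by omega)
        omega
    have h0 : s 0 = 0 := by
      have hl := lin (n-1) (by omega)
      have := hlt (n-1) (by omega)
      omega
    intro i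
    apply Fin.ext
    have := lin i i.isLt
    rw [hs i] at this
    omega
  · right
    have down : ∀ i : ℕ, i + 1 < n → s (i+1) + 1 = s i := by
      intro i
      induction i with
      | zero => intro h; exact h01
      | succ m ih =>
        intro h
        have prev := ih (by omega)
        have hnorm : s (m+1+1) = s (m+2) := congrArg s (by omega)
        rcases hstep (m+1) h with h' | h'
        · have : m + 2 = m := hinj (m+2) m h (by omega) (by omega)
          omega
        · exact h'
    have lin : ∀ i : ℕ, i < n → s i + i = s 0 := by
      intro i
      induction i with
      | zero => intro h; omega
      | succ m ih =>
        intro h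
        have := down m h
        have := ih (by omega)
        omega
    have h0 : s 0 = n - 1 := by
      by_contra hne
      have hb0 : s 0 < n - 1 := by
        have := hlt 0 (by omega)
        omega
      have h1 : s (s 0) = 0 := by
        have := lin (s 0) (by omega)
        omega
      have h2 := down (s 0) (by omega)
      omega
    intro i
    have := lin i i.isLt
    rw [hs i] at this
    omega


omit [FiniteDimensional K V] in
lemma toMatrix_reindex_rev (f : Module.End K V) (b : Basis (Fin (finrank K V)) K V)
    (i j : Fin (finrank K V)) :
    LinearMap.toMatrix (b.reindex Fin.revPerm) (b.reindex Fin.revPerm) f i j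
      = LinearMap.toMatrix b b f i.rev j.rev := by
  rw [LinearMap.toMatrix_apply, LinearMap.toMatrix_apply, Module.Basis.reindex_apply,
    Basis.repr_reindex_apply]
  rfl

omit [FiniteDimensional K V] in
lemma reindex_standard {A Astar : Module.End K V} {b : Basis (Fin (finrank K V)) K V}
    (hb : IsAStandardBasis A Astar b) :
    IsAStandardBasis A Astar (b.reindex Fin.revPerm) := by
  refine ⟨?_, ?_, ?_⟩
  · intro i j hij
    rw [toMatrix_reindex_rev]
    exact hb.1 _ _ (fun h => hij (by rwa [Fin.rev_inj] at h))
  · intro i j hij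
    rw [toMatrix_reindex_rev]
    apply hb.2.1
    have hi := i.isLt
    have hj := j.isLt
    rw [Fin.val_rev, Fin.val_rev]
    omega
  · intro i j hij
    rw [toMatrix_reindex_rev]
    apply hb.2.2
    have hi := i.isLt
    have hj := j.isLt
    rw [Fin.val_rev, Fin.val_rev]
    omega

omit [FiniteDimensional K V] in
lemma flagOfBasis_smul_sigma {b b' : Basis (Fin (finrank K V)) K V}
    {σ : Fin (finrank K V) → Fin (finrank K V)}
    {c : Fin (finrank K V) → K} (hc : ∀ j, c j ≠ 0) (hbc : ∀ j, b' j = c j • b (σ j)) :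
    flagOfBasis b' = fun i => ⨆ k ≤ i, (K ∙ b (σ k)) := by
  funext i
  unfold flagOfBasis
  refine iSup_congr (fun k => iSup_congr (fun _ => ?_))
  rw [hbc k]
  exact Submodule.span_singleton_smul_eq (IsUnit.mk0 _ (hc k)) _

omit [FiniteDimensional K V] in
lemma flagOfBasis_zero (b : Basis (Fin (finrank K V)) K V) (h : 0 < finrank K V) :
    flagOfBasis b ⟨0, h⟩ = K ∙ b ⟨0, h⟩ := by
  unfold flagOfBasis
  apply le_antisymm
  · refine iSup₂_le (fun k hk => ?_)
    have : k = ⟨0, h⟩ := Fin.ext (Nat.le_zero.mp (Fin.le_def.mp hk))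
    rw [this]
  · exact le_iSup₂ (f := fun k (_ : k ≤ ⟨0, h⟩) => K ∙ b k) ⟨0, h⟩ le_rfl

omit [FiniteDimensional K V] in
lemma span_eq_scalar {u w : V} (h : (K ∙ u) = (K ∙ w)) (hw : w ≠ 0) :
    ∃ a : K, a ≠ 0 ∧ w = a • u := by
  have hmem : w ∈ (K ∙ u) := h ▸ Submodule.mem_span_singleton_self w
  obtain ⟨a, ha⟩ := Submodule.mem_span_singleton.mp hmem
  exact ⟨a, fun h0 => hw (by rw [← ha, h0, zero_smul]), ha.symm⟩

omit [FiniteDimensional K V] in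
lemma cross_ne {A Astar : Module.End K V} (hn : 2 ≤ finrank K V)
    {F G : Fin (finrank K V) → Submodule K V}
    (hF : IsAStandardFlag A Astar F) (hG : IsAStandardFlag Astar A G) : F ≠ G := by
  obtain ⟨b1, hb1, rfl⟩ := hF
  obtain ⟨b2, hb2, rfl⟩ := hG
  intro h
  have hpos : 0 < finrank K V := by omega
  have h0 := congrFun h ⟨0, hpos⟩
  rw [flagOfBasis_zero _ hpos, flagOfBasis_zero _ hpos] at h0
  obtain ⟨a, ha0, ha⟩ := span_eq_scalar h0 (b2.ne_zero _)
  have he2 : Astar (b2 ⟨0, hpos⟩)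
      = (LinearMap.toMatrix b2 b2 Astar ⟨0, hpos⟩ ⟨0, hpos⟩) • b2 ⟨0, hpos⟩ :=
    diag_eigen hb2.1 _
  have he1 : Astar (b1 ⟨0, hpos⟩)
      = (LinearMap.toMatrix b2 b2 Astar ⟨0, hpos⟩ ⟨0, hpos⟩) • b1 ⟨0, hpos⟩ := by
    have hb10 : b1 ⟨0, hpos⟩ = a⁻¹ • b2 ⟨0, hpos⟩ := by
      rw [ha, smul_smul, inv_mul_cancel₀ ha0, one_smul]
    rw [hb10, map_smul, he2, smul_smul, smul_smul, mul_comm]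
  have h01 : ¬((⟨0, hpos⟩ : Fin (finrank K V)) = ⟨1, by omega⟩) := by
    intro hh
    have := congrArg Fin.val hh
    simp at this
  have hzero : LinearMap.toMatrix b1 b1 Astar ⟨1, by omega⟩ ⟨0, hpos⟩ = 0 := by
    rw [LinearMap.toMatrix_apply, he1, map_smul, Finsupp.smul_apply, Basis.repr_self,
      smul_eq_mul, Finsupp.single_apply, if_neg h01, mul_zero]
  exact hb1.2.2 ⟨1, by omega⟩ ⟨0, hpos⟩ (Or.inr (by simp)) hzero

omit [FiniteDimensional K V] in
lemma flag_rev_ne (b : Basis (Fin (finrank K V)) K V) (hn : 2 ≤ finrank K V) :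
    flagOfBasis b ≠ flagOfBasis (b.reindex Fin.revPerm) := by
  intro h
  have hpos : 0 < finrank K V := by omega
  have h0 := congrFun h ⟨0, hpos⟩
  rw [flagOfBasis_zero _ hpos, flagOfBasis_zero _ hpos, Module.Basis.reindex_apply] at h0
  obtain ⟨a, ha0, ha⟩ := span_eq_scalar h0 (b.ne_zero _)
  have hne : ¬((⟨0, hpos⟩ : Fin (finrank K V)) = Fin.revPerm.symm ⟨0, hpos⟩) := by
    intro hh
    have := congrArg Fin.val hh
    rw [show (Fin.revPerm.symm (⟨0, hpos⟩ : Fin (finrank K V))) = Fin.rev ⟨0, hpos⟩ from rfl,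
      Fin.val_rev] at this
    simp at this
    omega
  have happ := congrArg (fun w => b.repr w (Fin.revPerm.symm ⟨0, hpos⟩)) ha
  simp only [Basis.repr_self, map_smul, Finsupp.smul_apply, smul_eq_mul] at happ
  rw [Finsupp.single_apply, if_pos rfl, Finsupp.single_apply, if_neg hne, mul_zero] at happ
  exact one_ne_zero happ


lemma flag_set_eq {A Astar : Module.End K V} (hn : 2 ≤ finrank K V)
    (hLP : IsLeonardPair A Astar) :
    ∃ b : Basis (Fin (finrank K V)) K V, IsAStandardBasis A Astar b ∧
      {F : Fin (finrank K V) → Submodule K V | IsAStandardFlag A Astar F}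
        = {flagOfBasis b, flagOfBasis (b.reindex Fin.revPerm)} := by
  obtain ⟨⟨b, hb⟩, hstar⟩ := hLP
  refine ⟨b, hb, ?_⟩
  ext F
  simp only [Set.mem_setOf_eq, Set.mem_insert_iff, Set.mem_singleton_iff]
  constructor
  · rintro ⟨b', hb', rfl⟩
    have hpos : 0 < finrank K V := by omega
    have hinj := theta_inj hb hstar hpos
    obtain ⟨σ, hσ, c, hc, hbc⟩ := sigma_exists hb' hinj hb.1
    have hadj := sigma_adj hb hb' hσ hc hbc
    have hflag := flagOfBasis_smul_sigma hc hbc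
    rcases path_lemma hn σ hσ hadj with hid | hrev
    · left
      rw [hflag]
      funext i
      unfold flagOfBasis
      exact iSup_congr fun k => iSup_congr fun _ => by rw [hid k]
    · right
      rw [hflag]
      funext i
      unfold flagOfBasis
      refine iSup_congr fun k => iSup_congr fun _ => ?_
      rw [Module.Basis.reindex_apply]
      have hk : σ k = Fin.revPerm.symm k := by
        apply Fin.ext
        rw [hrev k, show (Fin.revPerm.symm k : Fin (finrank K V)) = k.rev from rfl, Fin.val_rev]
        have := k.isLt
        omega
      rw [hk]
  · rintro (rfl | rfl)
    · exact ⟨b, hb, rfl⟩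
    · exact ⟨b.reindex Fin.revPerm, reindex_standard hb, rfl⟩

end Aux

set_option maxHeartbeats 1000000 in
theorem stmt_9 {K V : Type*} [Field K] [CharZero K] [AddCommGroup V] [Module K V]
    [FiniteDimensional K V] (hV : 2 ≤ finrank K V)
    (A Astar : Module.End K V) (hLP : IsLeonardPair A Astar) :
    {F : Fin (finrank K V) → Submodule K V | IsAStandardFlag A Astar F}.ncard = 2 ∧
    {F : Fin (finrank K V) → Submodule K V | IsAStandardFlag Astar A F}.ncard = 2 ∧
    ({F : Fin (finrank K V) → Submodule K V |
        IsAStandardFlag A Astar F ∨ IsAStandardFlag Astar A F}).ncard = 4 := by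
  have hLP' : IsLeonardPair Astar A := ⟨hLP.2, hLP.1⟩
  obtain ⟨b, hb, hSA⟩ := flag_set_eq hV hLP
  obtain ⟨e, he, hSB⟩ := flag_set_eq hV hLP'
  set F1 := flagOfBasis b with hF1
  set F2 := flagOfBasis (b.reindex Fin.revPerm) with hF2
  set G1 := flagOfBasis e with hG1
  set G2 := flagOfBasis (e.reindex Fin.revPerm) with hG2
  have hF1A : IsAStandardFlag A Astar F1 := ⟨b, hb, rfl⟩
  have hF2A : IsAStandardFlag A Astar F2 := ⟨b.reindex Fin.revPerm, reindex_standard hb, rfl⟩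
  have hG1A : IsAStandardFlag Astar A G1 := ⟨e, he, rfl⟩
  have hG2A : IsAStandardFlag Astar A G2 := ⟨e.reindex Fin.revPerm, reindex_standard he, rfl⟩
  have h12 : F1 ≠ F2 := flag_rev_ne b hV
  have hg12 : G1 ≠ G2 := flag_rev_ne e hV
  have h11 : F1 ≠ G1 := cross_ne hV hF1A hG1A
  have h1g2 : F1 ≠ G2 := cross_ne hV hF1A hG2A
  have h21 : F2 ≠ G1 := cross_ne hV hF2A hG1A
  have h22 : F2 ≠ G2 := cross_ne hV hF2A hG2A
  refine ⟨?_, ?_, ?_⟩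
  · rw [hSA]
    exact Set.ncard_pair h12
  · rw [hSB]
    exact Set.ncard_pair hg12
  · have hunion : {F : Fin (finrank K V) → Submodule K V |
        IsAStandardFlag A Astar F ∨ IsAStandardFlag Astar A F}
        = ({F1, F2, G1, G2} : Set (Fin (finrank K V) → Submodule K V)) := by
      rw [Set.setOf_or, hSA, hSB]
      ext x
      simp only [Set.mem_union, Set.mem_insert_iff, Set.mem_singleton_iff]
      tauto
    rw [hunion]
    have hne1 : F1 ∉ ({F2, G1, G2} : Set (Fin (finrank K V) → Submodule K V)) := by
      simp only [Set.mem_insert_iff, Set.mem_singleton_iff]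
      push_neg
      exact ⟨h12, h11, h1g2⟩
    have hne2 : F2 ∉ ({G1, G2} : Set (Fin (finrank K V) → Submodule K V)) := by
      simp only [Set.mem_insert_iff, Set.mem_singleton_iff]
      push_neg
      exact ⟨h21, h22⟩
    rw [Set.ncard_insert_of_notMem hne1 (Set.toFinite _),
      Set.ncard_insert_of_notMem hne2 (Set.toFinite _),
      Set.ncard_pair hg12]
end

section
/- Let V be a finite-dimensional vector space over a field K of characteristic 0 with dim V ≥ 2. Then there exist at most 3 mutually adjacent Leonard pairs on V. -/
open Module

variable {K V : Type*} [Field K] [AddCommGroup V] [Module K V] [FiniteDimensional K V]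

/-!
Let `P₀, …, P₃` be pairwise adjacent Leonard pairs. Take a basis `c` in which `P₀.1` is diagonal
and a basis `c'` in which `P₀.2` is diagonal. In a split basis the first vector is an eigenvector
of the upper bidiagonal member and the last vector one of the lower bidiagonal member. As `c` and
`c'` are split for every `Pⱼ` (`j ≥ 1`), some member `fⱼ` of `Pⱼ` has `c₀` and one of
`c'₀`, `c'ₗₐₛₜ` as eigenvectors, and by pigeonhole two indices `j ≠ k` pick the same vector `y`.

On the other hand a member `f` of a Leonard pair `P` and a member `g` of an adjacent pair `Q` have
at most one common eigenline: a standard basis `u` of `P` diagonalizing `f` contains a vector of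
every eigenline of `f`, `u` is split for `Q`, and as a Leonard pair has no nontrivial common
invariant subspace, the off-diagonal entries of its members in a split basis are nonzero, so each
member has a single eigenline among the `uᵢ`. Hence `y` is parallel to `c₀` and is an eigenvector
of `P₀.1`, which is impossible since `P₀.1` is irreducible tridiagonal in `c'` and `dim V ≥ 2`.
-/

open Submodule

section BasisMatrix

variable {R M ι : Type*} [CommSemiring R] [AddCommMonoid M] [Module R M]
  [Fintype ι] [DecidableEq ι]

theorem LinearMap.apply_basis_eq_sum_toMatrix (b : Basis ι R M) (f : Module.End R M) (j : ι) :
    f (b j) = ∑ i, LinearMap.toMatrix b b f i j • b i := by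
  simpa using Matrix.toLin_self (v₁ := b) (v₂ := b) (LinearMap.toMatrix b b f) j

theorem LinearMap.exists_apply_basis_eq_smul_iff (b : Basis ι R M) (f : Module.End R M) (j : ι) :
    (∃ μ : R, f (b j) = μ • b j) ↔ ∀ i, i ≠ j → LinearMap.toMatrix b b f i j = 0 := by
  constructor
  · rintro ⟨μ, h⟩ i hij
    simp [LinearMap.toMatrix_apply, h, hij.symm]
  · intro h
    refine ⟨LinearMap.toMatrix b b f j j, ?_⟩
    rw [apply_basis_eq_sum_toMatrix,
      Finset.sum_eq_single j (fun i _ hij => by rw [h i hij, zero_smul]) (by simp)]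

theorem LinearMap.apply_mem_span_image_of_toMatrix_eq_zero (b : Basis ι R M)
    {f : Module.End R M} {S : Set ι}
    (h : ∀ j ∈ S, ∀ i ∉ S, LinearMap.toMatrix b b f i j = 0) :
    ∀ x ∈ span R (b '' S), f x ∈ span R (b '' S) := by
  suffices span R (b '' S) ≤ (span R (b '' S)).comap f from fun x hx => this hx
  rw [span_le]
  rintro _ ⟨j, hj, rfl⟩
  refine b.mem_span_image.2 fun i hi => ?_
  by_contra hiS
  exact Finsupp.mem_support_iff.1 hi (by rw [← LinearMap.toMatrix_apply]; exact h j hj i hiS)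

end BasisMatrix

section BasisFin

variable {R M : Type*} [CommSemiring R] [AddCommMonoid M] [Module R M] {n : ℕ}
  {b : Basis (Fin n) R M} {f : Module.End R M}

theorem Matrix.IsDiag'.apply_basis_eq_smul (h : (LinearMap.toMatrix b b f).IsDiag') (j : Fin n) :
    f (b j) = LinearMap.toMatrix b b f j j • b j := by
  rw [LinearMap.apply_basis_eq_sum_toMatrix,
    Finset.sum_eq_single j (fun i _ hij => by rw [h i j hij, zero_smul]) (by simp)]

theorem Matrix.IsUpperBidiag.exists_apply_basis_eq_smul
    (h : (LinearMap.toMatrix b b f).IsUpperBidiag) {i : Fin n} (hi : (i : ℕ) = 0) :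
    ∃ μ : R, f (b i) = μ • b i :=
  (LinearMap.exists_apply_basis_eq_smul_iff b f i).2 fun k hk =>
    h k i (by rintro (rfl | h) <;> [exact hk rfl; omega])

theorem Matrix.IsLowerBidiag.exists_apply_basis_eq_smul
    (h : (LinearMap.toMatrix b b f).IsLowerBidiag) {i : Fin n} (hi : (i : ℕ) + 1 = n) :
    ∃ μ : R, f (b i) = μ • b i :=
  (LinearMap.exists_apply_basis_eq_smul_iff b f i).2 fun k hk =>
    h k i (by rintro (rfl | h) <;> [exact hk rfl; omega])

theorem Matrix.IsIrredTridiag.not_exists_apply_basis_eq_smul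
    (h : (LinearMap.toMatrix b b f).IsIrredTridiag) (hn : 2 ≤ n) (i : Fin n) :
    ¬ ∃ μ : R, f (b i) = μ • b i := by
  rw [LinearMap.exists_apply_basis_eq_smul_iff]
  intro hcol
  by_cases hi : (i : ℕ) + 1 < n
  · exact h.2 ⟨i + 1, hi⟩ i (Or.inr rfl) (hcol _ (Fin.ne_of_val_ne (by simp)))
  · exact h.2 ⟨i - 1, by omega⟩ i (Or.inl (by simp; omega))
      (hcol _ (Fin.ne_of_val_ne (by simp; omega)))

end BasisFin

theorem Fin.eq_empty_or_eq_univ_of_adj_mem {n : ℕ} {S : Set (Fin n)}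
    (hS : ∀ i ∈ S, ∀ j : Fin n, (i : ℕ) + 1 = j ∨ (j : ℕ) + 1 = i → j ∈ S) :
    S = ∅ ∨ S = Set.univ := by
  refine S.eq_empty_or_nonempty.imp id fun ⟨i, hi⟩ => Set.eq_univ_of_forall fun j => ?_
  suffices h : ∀ d : ℕ, ∀ j : Fin n, (j : ℕ) + d = i ∨ (i : ℕ) + d = j → j ∈ S from
    h ((i : ℕ) - j + (j - i)) j (by omega)
  intro d
  induction d with
  | zero => intro j hj; obtain rfl : j = i := Fin.ext (by omega); exact hi
  | succ d ih =>
    rintro j (hj | hj)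
    · exact hS ⟨j + 1, by omega⟩ (ih _ (Or.inl (by simp; omega))) j (Or.inr rfl)
    · exact hS ⟨j - 1, by omega⟩ (ih _ (Or.inr (by simp; omega))) j (Or.inl (by simp; omega))

section Tridiagonal

variable {R : Type*} [CommRing R] [NoZeroDivisors R] {n : ℕ}

theorem Matrix.IsIrredTridiag.eq_zero_of_mulVec_eq_smul {T : Matrix (Fin n) (Fin n) R}
    (hT : T.IsIrredTridiag) {x : Fin n → R} {μ : R} (hx : T.mulVec x = μ • x) (hn : 0 < n)
    (h0 : x ⟨0, hn⟩ = 0) : x = 0 := by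
  suffices h : ∀ m : ℕ, ∀ k : Fin n, (k : ℕ) ≤ m → x k = 0 from funext fun k => h k k le_rfl
  intro m
  induction m with
  | zero => intro k hk; obtain rfl : k = ⟨0, hn⟩ := Fin.ext (Nat.le_zero.1 hk); exact h0
  | succ m ih =>
    intro k hk
    rcases Nat.lt_or_ge (k : ℕ) (m + 1) with hlt | hge
    · exact ih k (by omega)
    -- row `m` of `T x = μ x` reads `T m (m+1) * x (m+1) = 0`
    have hrow := congrFun hx ⟨m, by omega⟩
    simp only [Pi.smul_apply, Matrix.mulVec, dotProduct] at hrow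
    rw [ih _ le_rfl, smul_zero, Finset.sum_eq_single k (fun j _ hj => ?_) (by simp)] at hrow
    · exact (mul_eq_zero.1 hrow).resolve_left (hT.2 _ _ (Or.inl (by simp; omega)))
    rcases Nat.lt_or_ge (j : ℕ) (m + 1) with hj' | hj'
    · rw [ih j (by omega), mul_zero]
    · rw [hT.1 _ _ (Or.inl (by simp; omega)), zero_mul]

variable {M : Type*} [AddCommGroup M] [Module R M]

theorem Matrix.IsIrredTridiag.eq_zero_of_apply_eq_smul {b : Basis (Fin n) R M}
    {f : Module.End R M} (hT : (LinearMap.toMatrix b b f).IsIrredTridiag) {x : M} {μ : R}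
    (hx : f x = μ • x) (hn : 0 < n) (h0 : b.repr x ⟨0, hn⟩ = 0) : x = 0 := by
  have hrepr := hT.eq_zero_of_mulVec_eq_smul (x := b.repr x) (μ := μ)
    (by rw [LinearMap.toMatrix_mulVec_repr, hx, map_smul]; rfl) hn h0
  exact b.repr.map_eq_zero_iff.1 (Finsupp.ext (congrFun hrepr))

end Tridiagonal

section LeonardPair

variable {K V : Type*} [Field K] [AddCommGroup V] [Module K V]

theorem Matrix.IsDiag'.exists_eq_smul_basis_of_apply_eq_smul {n : ℕ} {b b' : Basis (Fin n) K V}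
    {f : Module.End K V} (hb : (LinearMap.toMatrix b b f).IsDiag')
    (hb' : (LinearMap.toMatrix b' b' f).IsIrredTridiag) {x : V} {μ : K} (hx : f x = μ • x)
    (hx0 : x ≠ 0) : ∃ p, ∃ c : K, x = c • b p := by
  obtain ⟨p, hp⟩ : ∃ p, b.repr x p ≠ 0 := by
    by_contra! h
    exact hx0 (b.repr.map_eq_zero_iff.1 (Finsupp.ext h))
  have hμ : LinearMap.toMatrix b b f p p = μ := by
    have hrow := congrFun (LinearMap.toMatrix_mulVec_repr b b f x) p
    simp only [Matrix.mulVec, dotProduct] at hrow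
    rw [hx, map_smul, Finset.sum_eq_single p (fun j _ hj => by rw [hb p j hj.symm, zero_mul])
      (by simp)] at hrow
    exact mul_right_cancel₀ hp hrow
  have hbp : f (b p) = μ • b p := hμ ▸ hb.apply_basis_eq_smul p
  have hn : 0 < n := p.pos
  -- both `x` and `b p` lie in the `μ`-eigenspace, on which the first `b'`-coordinate is injective
  have hβ : b'.repr (b p) ⟨0, hn⟩ ≠ 0 := fun h =>
    b.ne_zero p (hb'.eq_zero_of_apply_eq_smul hbp hn h)
  have hw : b'.repr (b p) ⟨0, hn⟩ • x - b'.repr x ⟨0, hn⟩ • b p = 0 :=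
    hb'.eq_zero_of_apply_eq_smul (μ := μ) (by simp [hx, hbp, smul_sub, smul_comm μ]) hn
      (by simp [mul_comm])
  refine ⟨p, (b'.repr (b p) ⟨0, hn⟩)⁻¹ * b'.repr x ⟨0, hn⟩, ?_⟩
  rw [mul_smul, ← sub_eq_zero.1 hw, inv_smul_smul₀ hβ]

theorem Module.End.iSup_eigenspace_eq_top_of_isDiag' {n : ℕ} {b : Basis (Fin n) K V}
    {f : Module.End K V} (hb : (LinearMap.toMatrix b b f).IsDiag') :
    ⨆ μ, f.eigenspace μ = ⊤ := by
  rw [eq_top_iff, ← b.span_eq, span_le]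
  rintro _ ⟨k, rfl⟩
  exact mem_iSup_of_mem _ (mem_eigenspace_iff.2 (hb.apply_basis_eq_smul k))

theorem IsLeonardPair.symm {A As : Module.End K V} (h : IsLeonardPair A As) :
    IsLeonardPair As A :=
  ⟨h.2, h.1⟩

theorem Module.End.exists_apply_eq_smul_of_smul {f : Module.End K V} {x : V} {c : K} (hc : c ≠ 0)
    (h : ∃ μ : K, f (c • x) = μ • c • x) : ∃ μ : K, f x = μ • x := by
  obtain ⟨μ, hμ⟩ := h
  refine ⟨μ, smul_right_injective V hc ?_⟩
  simpa only [map_smul, smul_comm c μ] using hμ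

theorem IsLeonardPair.exists_isStandardBasis_isDiag' {A As f : Module.End K V}
    (h : IsLeonardPair A As) (hf : f = A ∨ f = As) :
    ∃ u u' : Basis (Fin (finrank K V)) K V, IsStandardBasis A As u ∧
      (LinearMap.toMatrix u u f).IsDiag' ∧ (LinearMap.toMatrix u' u' f).IsIrredTridiag := by
  obtain ⟨b, hb⟩ := h.1
  obtain ⟨b', hb'⟩ := h.2
  rcases hf with rfl | rfl
  exacts [⟨b, b', Or.inl hb, hb.1, hb'.2⟩, ⟨b', b, Or.inr hb', hb'.1, hb.2⟩]

theorem IsSplitBasis.exists_apply_eq_smul_first_last {A As : Module.End K V}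
    {u : Basis (Fin (finrank K V)) K V} (hu : IsSplitBasis A As u) {i j : Fin (finrank K V)}
    (hi : (i : ℕ) = 0) (hj : (j : ℕ) + 1 = finrank K V) :
    ((∃ μ : K, A (u i) = μ • u i) ∧ ∃ μ : K, As (u j) = μ • u j) ∨
      ((∃ μ : K, As (u i) = μ • u i) ∧ ∃ μ : K, A (u j) = μ • u j) := by
  rcases hu with ⟨hA, hAs⟩ | ⟨hA, hAs⟩
  · exact Or.inr ⟨hAs.exists_apply_basis_eq_smul hi, hA.exists_apply_basis_eq_smul hj⟩
  · exact Or.inl ⟨hA.exists_apply_basis_eq_smul hi, hAs.exists_apply_basis_eq_smul hj⟩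

variable [FiniteDimensional K V]

theorem IsLeonardPair.eq_bot_or_eq_top {A As : Module.End K V} (hLP : IsLeonardPair A As)
    {W : Submodule K V} (hA : ∀ x ∈ W, A x ∈ W) (hAs : ∀ x ∈ W, As x ∈ W) : W = ⊥ ∨ W = ⊤ := by
  obtain ⟨b, hbA, hbAs⟩ := hLP.1
  obtain ⟨b', -, hb'A⟩ := hLP.2
  set S : Set (Fin (finrank K V)) := {k | b k ∈ W}
  -- `W` is the sum of its intersections with the eigenlines `K ∙ b k` of `A`
  have hWS : W = span K (b '' S) := by
    refine le_antisymm ?_ (span_le.2 (by rintro _ ⟨k, hk, rfl⟩; exact hk))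
    have hW : W ≤ ⨆ μ, W ⊓ A.eigenspace μ := by
      simpa [Module.End.iSup_eigenspace_eq_top_of_isDiag' hbA] using
        (inf_iSup_genEigenspace hA 1).le
    refine hW.trans (iSup_le fun μ x ⟨hxW, hxE⟩ => ?_)
    obtain rfl | hx0 := eq_or_ne x 0
    · exact zero_mem _
    obtain ⟨p, c, rfl⟩ :=
      hbA.exists_eq_smul_basis_of_apply_eq_smul hb'A (Module.End.mem_eigenspace_iff.1 hxE) hx0
    have hc : c ≠ 0 := left_ne_zero_of_smul hx0
    have hp : b p ∈ W := by simpa [hc] using W.smul_mem c⁻¹ hxW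
    exact smul_mem _ _ (subset_span ⟨p, hp, rfl⟩)
  have hS : ∀ i ∈ S, ∀ j : Fin (finrank K V), (i : ℕ) + 1 = j ∨ (j : ℕ) + 1 = i → j ∈ S := by
    intro i hi j hij
    have h : As (b i) ∈ span K (b '' S) := hWS ▸ hAs _ hi
    refine (b.mem_span_image.1 h) (Finsupp.mem_support_iff.2 ?_)
    rw [← LinearMap.toMatrix_apply]
    exact hbAs.2 j i hij.symm
  rcases Fin.eq_empty_or_eq_univ_of_adj_mem hS with h | h
  · left; rw [hWS, h, Set.image_empty, span_empty]
  · right; rw [hWS, h, Set.image_univ, b.span_eq]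

theorem IsLeonardPair.eq_univ_of_toMatrix_eq_zero {A As : Module.End K V}
    (hLP : IsLeonardPair A As) (u : Basis (Fin (finrank K V)) K V) {S : Set (Fin (finrank K V))}
    (hS : S.Nonempty) (hA : ∀ j ∈ S, ∀ i ∉ S, LinearMap.toMatrix u u A i j = 0)
    (hAs : ∀ j ∈ S, ∀ i ∉ S, LinearMap.toMatrix u u As i j = 0) : S = Set.univ := by
  rcases hLP.eq_bot_or_eq_top (LinearMap.apply_mem_span_image_of_toMatrix_eq_zero u hA)
      (LinearMap.apply_mem_span_image_of_toMatrix_eq_zero u hAs) with h | h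
  · obtain ⟨j, hj⟩ := hS
    have hj' : u j ∈ span K (u '' S) := subset_span ⟨j, hj, rfl⟩
    exact absurd (h ▸ hj') (by simpa using u.ne_zero j)
  · exact Set.eq_univ_of_forall fun i => u.self_mem_span_image.1 (h ▸ mem_top)

section Split

variable {A As : Module.End K V} {u : Basis (Fin (finrank K V)) K V}

/-- If the subdiagonal entry at `(j + 1, j)` vanished, the span of `u₀, …, u_j` would be
invariant under both members. -/
theorem IsLeonardPair.toMatrix_lower_ne_zero (hLP : IsLeonardPair A As)
    (hA : (LinearMap.toMatrix u u A).IsLowerBidiag)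
    (hAs : (LinearMap.toMatrix u u As).IsUpperBidiag) {i j : Fin (finrank K V)}
    (hij : (i : ℕ) = j + 1) : LinearMap.toMatrix u u A i j ≠ 0 := by
  intro h0
  have hS := hLP.eq_univ_of_toMatrix_eq_zero u (S := {k | (k : ℕ) ≤ j}) ⟨j, Nat.le_refl _⟩
    (fun k hk m hm => by
      simp only [Set.mem_ofPred_eq, not_le] at hk hm
      by_cases hmk : (m : ℕ) = k + 1
      · obtain rfl : m = i := Fin.ext (by omega)
        obtain rfl : k = j := Fin.ext (by omega)
        exact h0
      · exact hA m k (by rintro (rfl | h) <;> omega))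
    (fun k hk m hm => hAs m k fun hmk => by
      simp only [Set.mem_ofPred_eq, not_le] at hk hm
      rcases hmk with rfl | _ <;> omega)
  have hi : i ∈ {k : Fin (finrank K V) | (k : ℕ) ≤ j} := hS ▸ Set.mem_univ i
  simp only [Set.mem_ofPred_eq] at hi
  omega

/-- If the superdiagonal entry at `(i, i + 1)` vanished, the span of `u_{i+1}, u_{i+2}, …`
would be invariant under both members. -/
theorem IsLeonardPair.toMatrix_upper_ne_zero (hLP : IsLeonardPair A As)
    (hA : (LinearMap.toMatrix u u A).IsLowerBidiag)
    (hAs : (LinearMap.toMatrix u u As).IsUpperBidiag) {i j : Fin (finrank K V)}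
    (hij : (j : ℕ) = i + 1) : LinearMap.toMatrix u u As i j ≠ 0 := by
  intro h0
  have hS := hLP.eq_univ_of_toMatrix_eq_zero u (S := {k | (i : ℕ) < k}) ⟨j, by simp; omega⟩
    (fun k hk m hm => hA m k fun hmk => by
      simp only [Set.mem_ofPred_eq, not_lt] at hk hm
      rcases hmk with rfl | _ <;> omega)
    (fun k hk m hm => by
      simp only [Set.mem_ofPred_eq, not_lt] at hk hm
      by_cases hmk : (k : ℕ) = m + 1
      · obtain rfl : m = i := Fin.ext (by omega)
        obtain rfl : k = j := Fin.ext (by omega)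
        exact h0
      · exact hAs m k (by rintro (rfl | h) <;> omega))
  have hi : i ∈ {k : Fin (finrank K V) | (i : ℕ) < k} := hS ▸ Set.mem_univ i
  simp at hi

theorem IsLeonardPair.val_add_one_eq_finrank_of_lower (hLP : IsLeonardPair A As)
    (hA : (LinearMap.toMatrix u u A).IsLowerBidiag)
    (hAs : (LinearMap.toMatrix u u As).IsUpperBidiag) {p : Fin (finrank K V)}
    (hp : ∃ μ : K, A (u p) = μ • u p) : (p : ℕ) + 1 = finrank K V := by
  by_contra hne
  have hlt : (p : ℕ) + 1 < finrank K V := by omega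
  exact hLP.toMatrix_lower_ne_zero hA hAs (i := ⟨p + 1, hlt⟩) rfl
    ((LinearMap.exists_apply_basis_eq_smul_iff u A p).1 hp _ (Fin.ne_of_val_ne (by simp)))

theorem IsLeonardPair.val_eq_zero_of_upper (hLP : IsLeonardPair A As)
    (hA : (LinearMap.toMatrix u u A).IsLowerBidiag)
    (hAs : (LinearMap.toMatrix u u As).IsUpperBidiag) {p : Fin (finrank K V)}
    (hp : ∃ μ : K, As (u p) = μ • u p) : (p : ℕ) = 0 := by
  by_contra hne
  exact hLP.toMatrix_upper_ne_zero hA hAs (i := ⟨p - 1, by omega⟩) (by simp; omega)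
    ((LinearMap.exists_apply_basis_eq_smul_iff u As p).1 hp _ (Fin.ne_of_val_ne (by simp; omega)))

theorem IsLeonardPair.eq_of_isSplitBasis (hLP : IsLeonardPair A As) (hu : IsSplitBasis A As u)
    {f : Module.End K V} (hf : f = A ∨ f = As) {p q : Fin (finrank K V)}
    (hp : ∃ μ : K, f (u p) = μ • u p) (hq : ∃ μ : K, f (u q) = μ • u q) : p = q := by
  have key : ∀ {B Bs : Module.End K V}, IsLeonardPair B Bs →
      (LinearMap.toMatrix u u B).IsLowerBidiag → (LinearMap.toMatrix u u Bs).IsUpperBidiag →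
      (f = B ∨ f = Bs) → p = q := by
    rintro B Bs hL hB hBs (rfl | rfl)
    · have := hL.val_add_one_eq_finrank_of_lower hB hBs hp
      have := hL.val_add_one_eq_finrank_of_lower hB hBs hq
      exact Fin.ext (by omega)
    · exact Fin.ext ((hL.val_eq_zero_of_upper hB hBs hp).trans
        (hL.val_eq_zero_of_upper hB hBs hq).symm)
  rcases hu with ⟨hA, hAs⟩ | ⟨hA, hAs⟩
  · exact key hLP hA hAs hf
  · exact key hLP.symm hAs hA hf.symm

end Split

theorem LPAdjacent.exists_eq_smul_of_common_eigenvector {Q R : Module.End K V × Module.End K V}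
    (hQ : IsLeonardPair Q.1 Q.2) (hR : IsLeonardPair R.1 R.2) (hQR : LPAdjacent Q R)
    {f g : Module.End K V} (hf : f = Q.1 ∨ f = Q.2) (hg : g = R.1 ∨ g = R.2) {x y : V}
    (hx : x ≠ 0) (hy : y ≠ 0) (hxf : ∃ μ : K, f x = μ • x) (hyf : ∃ μ : K, f y = μ • y)
    (hxg : ∃ μ : K, g x = μ • x) (hyg : ∃ μ : K, g y = μ • y) : ∃ a : K, y = a • x := by
  obtain ⟨u, u', hu, hfu, hfu'⟩ := hQ.exists_isStandardBasis_isDiag' hf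
  obtain ⟨μ, hμ⟩ := hxf
  obtain ⟨ν, hν⟩ := hyf
  obtain ⟨p, c, rfl⟩ := hfu.exists_eq_smul_basis_of_apply_eq_smul hfu' hμ hx
  obtain ⟨q, d, rfl⟩ := hfu.exists_eq_smul_basis_of_apply_eq_smul hfu' hν hy
  have hc : c ≠ 0 := left_ne_zero_of_smul hx
  obtain rfl : p = q := hR.eq_of_isSplitBasis (hQR.1 u hu) hg
    (Module.End.exists_apply_eq_smul_of_smul hc hxg)
    (Module.End.exists_apply_eq_smul_of_smul (left_ne_zero_of_smul hy) hyg)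
  exact ⟨d / c, by rw [smul_smul, div_mul_cancel₀ _ hc]⟩

end LeonardPair

theorem stmt_10_general {K V : Type*} [Field K] [AddCommGroup V] [Module K V]
    [FiniteDimensional K V] (hV : 2 ≤ finrank K V) :
    ¬ ∃ P : Fin 4 → Module.End K V × Module.End K V,
        (∀ i, IsLeonardPair (P i).1 (P i).2) ∧
        (∀ i j, i ≠ j → P i ≠ P j) ∧
        (∀ i j, i ≠ j → LPAdjacent (P i) (P j)) := by
  rintro ⟨P, hLP, -, hadj⟩
  obtain ⟨c, hc⟩ := (hLP 0).1
  obtain ⟨c', hc'⟩ := (hLP 0).2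
  let z : Fin (finrank K V) := ⟨0, by omega⟩
  let l : Fin (finrank K V) := ⟨finrank K V - 1, by omega⟩
  have hl : (l : ℕ) + 1 = finrank K V := Nat.sub_add_cancel (by omega)
  have key : ∀ j : Fin 3, ∃ β : Bool, ∃ f, (f = (P j.succ).1 ∨ f = (P j.succ).2) ∧
      (∃ μ : K, f (c z) = μ • c z) ∧ ∃ μ : K, f (c' (cond β z l)) = μ • c' (cond β z l) := by
    intro j
    have hsplit := (hadj 0 j.succ (Fin.succ_ne_zero j).symm).1
    rcases (hsplit c (Or.inl hc)).exists_apply_eq_smul_first_last (i := z) rfl hl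
      with ⟨h, -⟩ | ⟨h, -⟩ <;>
    rcases (hsplit c' (Or.inr hc')).exists_apply_eq_smul_first_last (i := z) rfl hl
      with ⟨h0, h1⟩ | ⟨h0, h1⟩
    exacts [⟨true, _, Or.inl rfl, h, h0⟩, ⟨false, _, Or.inl rfl, h, h1⟩,
      ⟨false, _, Or.inr rfl, h, h1⟩, ⟨true, _, Or.inr rfl, h, h0⟩]
  choose β f hf using key
  obtain ⟨j, k, hjk, hβ⟩ := Fintype.exists_ne_map_eq_of_card_lt β (by simp)
  have hadjjk := hadj j.succ k.succ ((Fin.succ_injective _).ne hjk)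
  obtain ⟨a, ha⟩ := hadjjk.exists_eq_smul_of_common_eigenvector (hLP _) (hLP _) (hf j).1 (hf k).1
    (c.ne_zero z) (c'.ne_zero _) (hf j).2.1 (hf j).2.2 (hf k).2.1 (hβ ▸ (hf k).2.2)
  exact hc'.2.not_exists_apply_basis_eq_smul hV _
    ⟨_, by rw [ha, map_smul, hc.1.apply_basis_eq_smul z, smul_comm]⟩

theorem stmt_10 {K V : Type*} [Field K] [CharZero K] [AddCommGroup V] [Module K V]
    [FiniteDimensional K V] (hV : 2 ≤ finrank K V) :
    ¬ ∃ P : Fin 4 → Module.End K V × Module.End K V,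
        (∀ i, IsLeonardPair (P i).1 (P i).2) ∧
        (∀ i j, i ≠ j → P i ≠ P j) ∧
        (∀ i j, i ≠ j → LPAdjacent (P i) (P j)) :=
  stmt_10_general hV
end
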